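/- Let A = (Q, Σ, δ, s, F) be an input-consistent DFA in which the initial state s has no incoming transitions and every state is reachable from s, and let k ≥ 1. For u ∈ Q, let P̂_{k+1}(u) = ⋃_{w ∈ P_k(u)} P_k(w). Then P_{k+1}(u) = {v ∈ P̂_{k+1}(u) : suf_{2^{k+1}}(inf I_v) ≤ suf_{2^{k+1}}(inf I_{v'}) in co-lex order for every v' ∈ P̂_{k+1}(u)}. -/

import Mathlib

set_option linter.unusedSectionVars false
set_option linter.unusedVariables false


/-- A (possibly left-infinite) string over alphabet `A`, indexed from the END:
`f i` is the `i`-th character from the right, and `⊥` means the position is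
past the beginning of the string.  The elements of `Σ* ∪ Σ^ω` are the
well-formed (`CStr.WF`) such functions. -/
abbrev CStr (A : Type*) := ℕ → WithBot A

/-- Well-formed: once we run out of characters going leftwards, it stays so. -/
def CStr.WF {A : Type*} (f : CStr A) : Prop := ∀ i, f i = ⊥ → f (i + 1) = ⊥

/-- The string is finite (an element of `Σ*`). -/
def CStr.Finite {A : Type*} (f : CStr A) : Prop := ∃ i, f i = ⊥

/-- Length of a finite string. -/
noncomputable def CStr.length {A : Type*} (f : CStr A) : ℕ := sInf {i | f i = ⊥}

/-- A finite string, given as a list read left-to-right, viewed as a `CStr`. -/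
def CStr.ofList {A : Type*} (w : List A) : CStr A := fun i =>
  if h : i < w.length then (w.get ⟨w.length - 1 - i, by omega⟩ : WithBot A) else ⊥

/-- The co-lexicographic (strict) order on `Σ* ∪ Σ^ω`: compare the last
characters first (position `0`), a missing character (`⊥`) being smaller
than every character of the alphabet. -/
def colexLt {A : Type*} [LinearOrder A] (f g : CStr A) : Prop :=
  ∃ i, (∀ j, j < i → f j = g j) ∧ f i < g i

/-- The non-strict co-lex order. -/
def colexLe {A : Type*} [LinearOrder A] (f g : CStr A) : Prop := colexLt f g ∨ f = g

/-- `g` is the greatest lower bound (infimum) of `S` in `(Σ* ∪ Σ^ω, ≤)`. -/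
def IsColexGLB {A : Type*} [LinearOrder A] (S : Set (CStr A)) (g : CStr A) : Prop :=
  g.WF ∧ (∀ f ∈ S, colexLe g f) ∧ ∀ h, CStr.WF h → (∀ f ∈ S, colexLe h f) → colexLe h g

/-- `g` is the least upper bound (supremum) of `S` in `(Σ* ∪ Σ^ω, ≤)`. -/
def IsColexLUB {A : Type*} [LinearOrder A] (S : Set (CStr A)) (g : CStr A) : Prop :=
  g.WF ∧ (∀ f ∈ S, colexLe f g) ∧ ∀ h, CStr.WF h → (∀ f ∈ S, colexLe f h) → colexLe g h

/-- A DFA `(Q, A, δ, start, accept)` with a partial transition function. -/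
structure PDFA (A Q : Type*) where
  δ : Q → A → Option Q
  start : Q
  accept : Set Q

/-- The transition function extended to finite strings (read left-to-right). -/
def PDFA.δStar {A Q : Type*} (M : PDFA A Q) : Q → List A → Option Q
  | q, [] => some q
  | q, a :: w => (M.δ q a).bind fun q' => M.δStar q' w

/-- `I_u`: the set of finite strings reaching `u` from the initial state. -/
def PDFA.I {A Q : Type*} (M : PDFA A Q) (u : Q) : Set (List A) :=
  {w | M.δStar M.start w = some u}

/-- The initial state has no incoming transitions. -/
def PDFA.NoIncomingStart {A Q : Type*} (M : PDFA A Q) : Prop :=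
  ∀ v a, M.δ v a ≠ some M.start

/-- Every state is reachable from the initial state. -/
def PDFA.Reachable {A Q : Type*} (M : PDFA A Q) : Prop :=
  ∀ u, ∃ w : List A, M.δStar M.start w = some u

/-- Input consistency: all transitions entering a state `u` carry the same
label `lam u`. -/
def PDFA.InputConsistent {A Q : Type*} (M : PDFA A Q) (lam : Q → A) : Prop :=
  ∀ v a u, M.δ v a = some u → lam u = a

/-- The maximum co-lex order `<_A` on the states of a DFA:
`u <_A v` iff `α < β` for every `α ∈ I_u` and every `β ∈ I_v`. -/
def PDFA.colexStateLt {A Q : Type*} [LinearOrder A] (M : PDFA A Q) (u v : Q) : Prop :=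
  ∀ α ∈ M.I u, ∀ β ∈ M.I v, colexLt (CStr.ofList α) (CStr.ofList β)

/-- `suf_k`: the length-`k` suffix of a string; positions `≥ k` are cut off.
(The `⊥` entries at positions `< k` play the role of the left-padding symbol
`#`, which is smaller than every character of the alphabet.) -/
def CStr.suf {A : Type*} (k : ℕ) (f : CStr A) : CStr A := fun i => if i < k then f i else ⊥

/-- `β^ω · α` : the left-infinite string obtained by concatenating infinitely
many copies of `β`, followed (at the right end) by `α`. -/
def CStr.omegaAppend {A : Type*} (b a : List A) : CStr A := fun i =>
  if i < a.length then CStr.ofList a i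
  else CStr.ofList b ((i - a.length) % b.length)

/-- Appending one character at the (right) end of a possibly infinite string. -/
def CStr.snoc {A : Type*} (f : CStr A) (a : A) : CStr A := fun i =>
  match i with
  | 0 => (a : WithBot A)
  | Nat.succ j => f j

/-- Removing the last `k` characters of a string. -/
def CStr.drop {A : Type*} (f : CStr A) (k : ℕ) : CStr A := fun i => f (i + k)

/-- `suf_m(x)` is a prefix of `suf_{2m}(y)`. -/
def ExtPrefix {A : Type*} (x y : CStr A) (m : ℕ) : Prop := ∀ j, j < m → x j = y (m + j)

/-- The set of extenders of `u` at distance `m` (used with `m = 2^k`), where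
`g u` denotes the infimum string `inf I_u`:
`P(u) = {v ∈ Q : δ(v, suf_m(inf I_u)) = u ∧ suf_m(inf I_v) is a prefix of suf_{2m}(inf I_u)}`.
(The first condition is expressed by exhibiting the genuine length-`m` word
`w = suf_m(inf I_u)` over the alphabet; if `inf I_u` is shorter than `m`, the
padded suffix contains `#` and no state can read it, as `# ∉ Σ`.) -/
def PDFA.Pset {A Q : Type*} (M : PDFA A Q) (g : Q → CStr A) (m : ℕ) (u : Q) : Set Q :=
  {v | (∃ w : List A, w.length = m ∧ (∀ j, j < m → CStr.ofList w j = g u j) ∧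
          M.δStar v w = some u) ∧ ExtPrefix (g v) (g u) m}


section Aux

variable {A : Type*} [LinearOrder A]

private lemma colexLt_trans {f g h : CStr A} (h1 : colexLt f g) (h2 : colexLt g h) :
    colexLt f h := by
  obtain ⟨i, hi, hlt⟩ := h1
  obtain ⟨i', hi', hlt'⟩ := h2
  rcases lt_trichotomy i i' with hc | hc | hc
  · exact ⟨i, fun j hj => (hi j hj).trans (hi' j (hj.trans hc)),
      by rw [hi' i hc] at hlt; exact hlt⟩
  · subst hc; exact ⟨i, fun j hj => (hi j hj).trans (hi' j hj), hlt.trans hlt'⟩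
  · exact ⟨i', fun j hj => (hi j (hj.trans hc)).trans (hi' j hj),
      by rw [hi i' hc]; exact hlt'⟩

private lemma colexLt_irrefl (f : CStr A) : ¬ colexLt f f := by
  rintro ⟨i, _, hlt⟩; exact lt_irrefl _ hlt

private lemma colexLe_trans {f g h : CStr A} (h1 : colexLe f g) (h2 : colexLe g h) :
    colexLe f h := by
  rcases h1 with h1 | rfl
  · rcases h2 with h2 | rfl
    · exact Or.inl (colexLt_trans h1 h2)
    · exact Or.inl h1
  · exact h2

private lemma colexLe_antisymm {f g : CStr A} (h1 : colexLe f g) (h2 : colexLe g f) :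
    f = g := by
  rcases h1 with h1 | rfl
  · rcases h2 with h2 | rfl
    · exact absurd (colexLt_trans h1 h2) (colexLt_irrefl f)
    · rfl
  · rfl

private lemma colexLe_total (f g : CStr A) : colexLe f g ∨ colexLe g f := by
  by_cases h : f = g
  · exact Or.inl (Or.inr h)
  · have hne : ∃ j, f j ≠ g j := by
      by_contra hc; push_neg at hc; exact h (funext hc)
    classical
    have hj0 : f (Nat.find hne) ≠ g (Nat.find hne) := Nat.find_spec hne
    have hag : ∀ j < Nat.find hne, f j = g j := fun j hj => not_not.mp (Nat.find_min hne hj)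
    rcases lt_or_gt_of_ne hj0 with hlt | hgt
    · exact Or.inl (Or.inl ⟨_, hag, hlt⟩)
    · exact Or.inr (Or.inl ⟨_, fun j hj => (hag j hj).symm, hgt⟩)

private lemma le_agree_imp_le_at {f g : CStr A} {i : ℕ} (h : colexLe f g)
    (hag : ∀ j < i, f j = g j) : f i ≤ g i := by
  rcases h with ⟨i', hi', hlt⟩ | rfl
  · rcases lt_trichotomy i' i with hc | rfl | hc
    · exact absurd hlt (by rw [hag i' hc]; exact lt_irrefl _)
    · exact le_of_lt hlt
    · exact le_of_eq (hi' i hc)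
  · exact le_rfl

private lemma colex_sandwich {a b c : CStr A} {t : ℕ} (h1 : colexLe a b) (h2 : colexLe b c)
    (hag : ∀ j < t, a j = c j) : ∀ j < t, b j = a j := by
  intro j hj
  by_contra hne0
  classical
  have hex : ∃ j, j < t ∧ b j ≠ a j := ⟨j, hj, hne0⟩
  obtain ⟨hj0t, hj0ne⟩ := Nat.find_spec hex
  have hagj : ∀ i < Nat.find hex, b i = a i := fun i hi => by
    by_contra hc
    exact Nat.find_min hex hi ⟨hi.trans hj0t, hc⟩
  have h1' : a (Nat.find hex) ≤ b (Nat.find hex) :=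
    le_agree_imp_le_at h1 (fun i hi => (hagj i hi).symm)
  have h2' : b (Nat.find hex) ≤ c (Nat.find hex) :=
    le_agree_imp_le_at h2 (fun i hi => (hagj i hi).trans (hag i (hi.trans hj0t)))
  rw [← hag _ hj0t] at h2'
  exact hj0ne (le_antisymm h2' h1')

private lemma agree_then_le_drop {f g : CStr A} {t : ℕ} (h : colexLe f g)
    (hag : ∀ j < t, f j = g j) : colexLe (f.drop t) (g.drop t) := by
  rcases h with ⟨i, hi, hlt⟩ | rfl
  · rcases lt_or_ge i t with hit | hit
    · exact absurd hlt (by rw [hag i hit]; exact lt_irrefl _)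
    · left
      refine ⟨i - t, fun j hj => ?_, ?_⟩
      · have : j + t < i := by omega
        simpa [CStr.drop] using hi (j + t) this
      · simpa [CStr.drop, Nat.sub_add_cancel hit] using hlt
  · exact Or.inr rfl

private lemma colexLe_suf {f g : CStr A} (t : ℕ) (h : colexLe f g) :
    colexLe (CStr.suf t f) (CStr.suf t g) := by
  rcases h with ⟨i, hi, hlt⟩ | rfl
  · rcases lt_or_ge i t with hit | hit
    · left
      refine ⟨i, fun j hj => ?_, ?_⟩
      · simp only [CStr.suf]
        by_cases hjt : j < t
        · rw [if_pos hjt, if_pos hjt, hi j hj]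
        · rw [if_neg hjt, if_neg hjt]
      · simpa [CStr.suf, hit] using hlt
    · right
      funext j
      simp only [CStr.suf]
      by_cases hjt : j < t
      · rw [if_pos hjt, if_pos hjt, hi j (hjt.trans_le hit)]
      · rw [if_neg hjt, if_neg hjt]
  · exact Or.inr rfl

private lemma suf_eq_pointwise {f g : CStr A} {t : ℕ} (h : CStr.suf t f = CStr.suf t g) :
    ∀ j < t, f j = g j := by
  intro j hj
  have := congrFun h j
  simpa [CStr.suf, if_pos hj] using this

private lemma suf_congr {f g : CStr A} {t : ℕ} (h : ∀ j < t, f j = g j) :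
    CStr.suf t f = CStr.suf t g := by
  funext j
  simp only [CStr.suf]
  by_cases hjt : j < t
  · rw [if_pos hjt, if_pos hjt, h j hjt]
  · rw [if_neg hjt, if_neg hjt]

private lemma WF_drop {f : CStr A} (h : f.WF) (t : ℕ) : (f.drop t).WF := by
  intro i hi
  have := h (i + t) hi
  simpa [CStr.drop, Nat.add_right_comm] using this

private lemma ofList_eq_bot {w : List A} {j : ℕ} (h : w.length ≤ j) : CStr.ofList w j = ⊥ :=
  dif_neg (not_lt.mpr h)

private lemma ofList_ne_bot {w : List A} {j : ℕ} (h : j < w.length) : CStr.ofList w j ≠ ⊥ := by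
  rw [CStr.ofList, dif_pos h]
  exact WithBot.coe_ne_bot

private lemma ofList_WF (w : List A) : (CStr.ofList w).WF := by
  intro i hi
  by_contra hc
  have hlen : i + 1 < w.length := lt_of_not_ge fun hl => hc (ofList_eq_bot hl)
  exact ofList_ne_bot (by omega) hi

private lemma ofList_eval (w : List A) (j : ℕ) (h : j < w.length) :
    CStr.ofList w j = (w[w.length - 1 - j]'(by omega) : A) := by
  rw [CStr.ofList, dif_pos h]; rfl

private lemma ofList_append (x y : List A) (j : ℕ) :
    CStr.ofList (x ++ y) j =
      if j < y.length then CStr.ofList y j else CStr.ofList x (j - y.length) := by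
  have hlen : (x ++ y).length = x.length + y.length := List.length_append
  by_cases hy : j < y.length
  · rw [if_pos hy]
    rw [ofList_eval (x ++ y) j (by omega), ofList_eval y j hy]
    rw [List.getElem_append_right (by omega)]
    simp only [hlen]
    simp only [show x.length + y.length - 1 - j - x.length = y.length - 1 - j from by omega]
  · rw [if_neg hy]
    by_cases hx : j - y.length < x.length
    · rw [ofList_eval (x ++ y) j (by omega), ofList_eval x (j - y.length) hx]
      rw [List.getElem_append_left (by omega)]
      simp only [hlen]
      simp only [show x.length + y.length - 1 - j = x.length - 1 - (j - y.length) from by omega]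
    · rw [ofList_eq_bot (by omega), ofList_eq_bot (by omega)]

private lemma ofList_singleton (a : A) (j : ℕ) :
    CStr.ofList [a] j = if j = 0 then (a : WithBot A) else ⊥ := by
  by_cases h : j = 0
  · subst h; rw [if_pos rfl, CStr.ofList, dif_pos (by simp)]; rfl
  · rw [if_neg h, ofList_eq_bot (by simp; omega)]

end Aux

section DFAAux

variable {A Q : Type*} [LinearOrder A]

private lemma δStar_append (M : PDFA A Q) (q : Q) (x y : List A) :
    M.δStar q (x ++ y) = (M.δStar q x).bind fun z => M.δStar z y := by
  induction x generalizing q with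
  | nil => simp [PDFA.δStar]
  | cons a x ih =>
    simp only [List.cons_append, PDFA.δStar]
    cases M.δ q a with
    | none => rfl
    | some q' => simpa using ih q'

private lemma δStar_singleton (M : PDFA A Q) (q : Q) (a : A) :
    M.δStar q [a] = M.δ q a := by
  simp [PDFA.δStar]

end DFAAux


section MainAux

variable {A Q : Type*} [LinearOrder A] [Fintype Q]
variable (M : PDFA A Q) (lam : Q → A) (ginf : Q → CStr A)

/-- Reading lemma: if `v` can reach `u` reading a word matching `suf t (ginf u)`,
then `drop t (ginf u)` is a lower bound for `I_v`, hence `≤ ginf v`. -/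
private lemma reach_lb (hinf : ∀ u, IsColexGLB (CStr.ofList '' M.I u) (ginf u))
    {u v : Q} {W : List A} {t : ℕ} (hlen : W.length = t)
    (hW : ∀ j < t, CStr.ofList W j = ginf u j) (hδ : M.δStar v W = some u) :
    colexLe ((ginf u).drop t) (ginf v) := by
  apply (hinf v).2.2 _ (WF_drop (hinf u).1 t)
  rintro f ⟨α, hα, rfl⟩
  have hmem : α ++ W ∈ M.I u := by
    show M.δStar M.start (α ++ W) = some u
    rw [δStar_append, hα]
    exact hδ
  have h1 : colexLe (ginf u) (CStr.ofList (α ++ W)) := (hinf u).2.1 _ ⟨_, hmem, rfl⟩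
  have hag : ∀ j < t, ginf u j = CStr.ofList (α ++ W) j := fun j hj => by
    rw [ofList_append, if_pos (by omega : j < W.length)]
    exact (hW j hj).symm
  have h2 := agree_then_le_drop h1 hag
  have hdrop : (CStr.ofList (α ++ W)).drop t = CStr.ofList α := by
    funext i
    show CStr.ofList (α ++ W) (i + t) = CStr.ofList α i
    rw [ofList_append, if_neg (by omega), hlen]
    congr 1
    omega
  rwa [hdrop] at h2

private lemma mem_I_ne_nil (hinf : ∀ u, IsColexGLB (CStr.ofList '' M.I u) (ginf u))
    {u : Q} (hne : ginf u 0 ≠ ⊥) {w : List A} (hw : w ∈ M.I u) : w ≠ [] := by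
  rintro rfl
  have h1 : colexLe (ginf u) (CStr.ofList ([] : List A)) := (hinf u).2.1 _ ⟨_, hw, rfl⟩
  rcases h1 with ⟨i, _, hlt⟩ | heq
  · rw [ofList_eq_bot (by simp)] at hlt
    exact not_lt_bot hlt
  · exact hne (by rw [heq]; exact ofList_eq_bot (by simp))

/-- Decomposition: if `ginf u 0 ≠ ⊥` then every word of `I_u` ends with `lam u`. -/
private lemma decomp_I (hic : M.InputConsistent lam)
    (hinf : ∀ u, IsColexGLB (CStr.ofList '' M.I u) (ginf u))
    {u : Q} (hne : ginf u 0 ≠ ⊥) {w : List A} (hw : w ∈ M.I u) :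
    ∃ w' v, w = w' ++ [lam u] ∧ w' ∈ M.I v ∧ M.δ v (lam u) = some u := by
  rcases (List.eq_nil_or_concat w) with rfl | ⟨L, b, rfl⟩
  · exact absurd rfl (mem_I_ne_nil M ginf hinf hne hw)
  · rw [List.concat_eq_append] at hw
    have hw' : M.δStar M.start (L ++ [b]) = some u := hw
    rw [δStar_append] at hw'
    rcases hv : M.δStar M.start L with _ | v
    · rw [hv] at hw'; simp at hw'
    · rw [hv] at hw'
      simp only [Option.bind_some] at hw'
      rw [δStar_singleton] at hw'
      have hb : b = lam u := (hic v b u hw').symm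
      exact ⟨L, v, by rw [List.concat_eq_append, hb], hv, by rw [← hb]; exact hw'⟩

/-- The last character of `ginf u` is `lam u` (when it is not `⊥`). -/
private lemma last_char (hic : M.InputConsistent lam) (hreach : M.Reachable)
    (hinf : ∀ u, IsColexGLB (CStr.ofList '' M.I u) (ginf u))
    {u : Q} (hne : ginf u 0 ≠ ⊥) : ginf u 0 = (lam u : WithBot A) := by
  obtain ⟨w0, hw0⟩ := hreach u
  have hw0' : w0 ∈ M.I u := hw0
  -- upper bound
  have hub : ginf u 0 ≤ (lam u : WithBot A) := by
    obtain ⟨w', v, rfl, _, _⟩ := decomp_I M lam ginf hic hinf hne hw0'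
    have h1 : colexLe (ginf u) (CStr.ofList (w' ++ [lam u])) := (hinf u).2.1 _ ⟨_, hw0', rfl⟩
    have := le_agree_imp_le_at h1 (fun j hj => absurd hj (Nat.not_lt_zero j))
    rwa [ofList_append, if_pos (by simp), ofList_singleton, if_pos rfl] at this
  -- lower bound: ofList [lam u] is a lower bound of I_u
  have hlb : colexLe (CStr.ofList [lam u]) (ginf u) := by
    apply (hinf u).2.2 _ (ofList_WF _)
    rintro f ⟨α, hα, rfl⟩
    obtain ⟨w', v, rfl, _, _⟩ := decomp_I M lam ginf hic hinf hne hα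
    rcases Nat.eq_zero_or_pos w'.length with hlen | hlen
    · right
      rw [List.eq_nil_of_length_eq_zero hlen]
      rfl
    · left
      refine ⟨1, fun j hj => ?_, ?_⟩
      · interval_cases j
        rw [ofList_singleton, if_pos rfl, ofList_append, if_pos (by simp), ofList_singleton,
          if_pos rfl]
      · rw [ofList_singleton, if_neg one_ne_zero, ofList_append, if_neg (by simp)]
        have : CStr.ofList w' (1 - 1) ≠ ⊥ := ofList_ne_bot (by simpa using hlen)
        exact this.bot_lt
  have := le_agree_imp_le_at hlb (fun j hj => absurd hj (Nat.not_lt_zero j))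
  rw [ofList_singleton, if_pos rfl] at this
  exact le_antisymm hub this

private lemma exists_colex_min (s : Finset Q) (hs : s.Nonempty) :
    ∃ v0 ∈ s, ∀ v ∈ s, colexLe (ginf v0) (ginf v) := by
  classical
  induction s using Finset.induction_on with
  | empty => exact absurd hs (by simp)
  | @insert a s ha ih =>
    rcases s.eq_empty_or_nonempty with rfl | hs'
    · exact ⟨a, by simp, by simp [colexLe]⟩
    · obtain ⟨v0, hv0, hmin⟩ := ih hs'
      rcases colexLe_total (ginf a) (ginf v0) with h | h
      · exact ⟨a, by simp, fun v hv => by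
          rcases Finset.mem_insert.mp hv with rfl | hv
          · exact Or.inr rfl
          · exact colexLe_trans h (hmin v hv)⟩
      · exact ⟨v0, by simp [hv0], fun v hv => by
          rcases Finset.mem_insert.mp hv with rfl | hv
          · exact h
          · exact hmin v hv⟩

/-- Predecessor step: the infimum string of `u` (with non-`⊥` last character)
is obtained from the infimum string of some predecessor by appending `lam u`. -/
private lemma pred_step (hic : M.InputConsistent lam) (hreach : M.Reachable)
    (hinf : ∀ u, IsColexGLB (CStr.ofList '' M.I u) (ginf u))
    {u : Q} (hne : ginf u 0 ≠ ⊥) :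
    ∃ v, M.δ v (lam u) = some u ∧ ginf v = (ginf u).drop 1 ∧
      ginf u 0 = (lam u : WithBot A) := by
  classical
  have hl := last_char M lam ginf hic hreach hinf hne
  set a := lam u with ha
  set V : Finset Q := Finset.univ.filter (fun v => M.δ v a = some u) with hV
  have hVmem : ∀ v, v ∈ V ↔ M.δ v a = some u := fun v => by simp [hV]
  -- V nonempty
  obtain ⟨w0, hw0⟩ := hreach u
  obtain ⟨w', v1, hw0eq, hw'I, hδv1⟩ := decomp_I M lam ginf hic hinf hne hw0
  have hVne : V.Nonempty := ⟨v1, (hVmem v1).mpr hδv1⟩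
  -- every v ∈ V satisfies drop 1 (ginf u) ≤ ginf v
  have hlow : ∀ v ∈ V, colexLe ((ginf u).drop 1) (ginf v) := by
    intro v hv
    refine reach_lb M ginf hinf (W := [a]) rfl (fun j hj => ?_) ?_
    · interval_cases j
      rw [ofList_singleton, if_pos rfl, hl]
    · rw [δStar_singleton]
      exact (hVmem v).mp hv
  -- get the minimum of V
  obtain ⟨v0, hv0V, hmin⟩ := exists_colex_min ginf V hVne
  -- G' := ginf v0 with `a` appended
  set G' : CStr A := fun i => if i = 0 then (a : WithBot A) else ginf v0 (i - 1) with hG'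
  have hG'WF : G'.WF := by
    intro i hi
    rcases Nat.eq_zero_or_pos i with rfl | hipos
    · simp only [hG', if_pos rfl] at hi
      exact absurd hi WithBot.coe_ne_bot
    · simp only [hG', if_neg (by omega : ¬ i = 0)] at hi
      have := (hinf v0).1 (i - 1) hi
      simp only [hG', if_neg (by omega : ¬ i + 1 = 0)]
      rw [show i + 1 - 1 = (i - 1) + 1 from by omega]
      exact this
  -- G' is a lower bound of I_u
  have hG'lb : colexLe G' (ginf u) := by
    apply (hinf u).2.2 _ hG'WF
    rintro f ⟨α, hα, rfl⟩
    obtain ⟨w', v, rfl, hw'I, hδv⟩ := decomp_I M lam ginf hic hinf hne hα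
    have h1 : colexLe (ginf v0) (CStr.ofList w') :=
      colexLe_trans (hmin v ((hVmem v).mpr hδv)) ((hinf v).2.1 _ ⟨_, hw'I, rfl⟩)
    rcases h1 with ⟨i, hi, hlt⟩ | heq
    · left
      refine ⟨i + 1, fun j hj => ?_, ?_⟩
      · rcases Nat.eq_zero_or_pos j with rfl | hjpos
        · simp only [hG', if_pos rfl]
          rw [ofList_append, if_pos (by simp), ofList_singleton, if_pos rfl]
        · simp only [hG', if_neg (by omega : ¬ j = 0)]
          rw [ofList_append, if_neg (by simp; omega)]
          simp only [List.length_singleton]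
          rw [hi (j - 1) (by omega)]
      · simp only [hG', if_neg (by omega : ¬ i + 1 = 0)]
        rw [ofList_append, if_neg (by simp)]
        simpa using hlt
    · right
      funext j
      rcases Nat.eq_zero_or_pos j with rfl | hjpos
      · simp only [hG', if_pos rfl]
        rw [ofList_append, if_pos (by simp), ofList_singleton, if_pos rfl]
      · simp only [hG', if_neg (by omega : ¬ j = 0)]
        rw [ofList_append, if_neg (by simp; omega)]
        simp only [List.length_singleton]
        rw [← heq]
  -- conclude
  have hag : ∀ j < 1, G' j = ginf u j := by
    intro j hj
    interval_cases j
    simp only [hG', if_pos rfl]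
    rw [hl]
  have h2 := agree_then_le_drop hG'lb hag
  have hdropG' : G'.drop 1 = ginf v0 := by
    funext i
    show G' (i + 1) = ginf v0 i
    simp only [hG', if_neg (by omega : ¬ i + 1 = 0)]
    congr 1
  rw [hdropG'] at h2
  exact ⟨v0, (hVmem v0).mp hv0V, colexLe_antisymm h2 (hlow v0 hv0V), hl⟩

/-- Chain lemma: walking backwards along minimal predecessors. -/
private lemma chain (hic : M.InputConsistent lam) (hreach : M.Reachable)
    (hinf : ∀ u, IsColexGLB (CStr.ofList '' M.I u) (ginf u)) :
    ∀ (t : ℕ) (u : Q), (∀ j < t, ginf u j ≠ ⊥) →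
      ∃ (b : Q) (W : List A), W.length = t ∧ (∀ j < t, CStr.ofList W j = ginf u j) ∧
        M.δStar b W = some u ∧ ginf b = (ginf u).drop t := by
  intro t
  induction t with
  | zero =>
    intro u _
    refine ⟨u, [], rfl, fun j hj => absurd hj (Nat.not_lt_zero j), rfl, ?_⟩
    funext i
    simp [CStr.drop]
  | succ t ih =>
    intro u hlive
    obtain ⟨v, hδv, hgv, hlam⟩ := pred_step M lam ginf hic hreach hinf (hlive 0 (Nat.succ_pos t))
    have hlivev : ∀ j < t, ginf v j ≠ ⊥ := by
      intro j hj
      rw [hgv]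
      exact hlive (j + 1) (by omega)
    obtain ⟨b, W', hlen, hmatch, hδ, hb⟩ := ih v hlivev
    refine ⟨b, W' ++ [lam u], by simp [hlen], ?_, ?_, ?_⟩
    · intro j hj
      rcases Nat.eq_zero_or_pos j with rfl | hjpos
      · rw [ofList_append, if_pos (by simp), ofList_singleton, if_pos rfl, hlam]
      · rw [ofList_append, if_neg (by simp; omega)]
        simp only [List.length_singleton]
        rw [hmatch (j - 1) (by omega), hgv]
        show ginf u (j - 1 + 1) = ginf u j
        congr 1
        omega
    · rw [δStar_append, hδ]
      simp only [Option.bind_some]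
      rw [δStar_singleton]
      exact hδv
    · rw [hb, hgv]
      funext i
      show ginf u (i + t + 1) = ginf u (i + (t + 1))
      rfl

end MainAux

/-- For an input-consistent DFA whose initial state has no
incoming transitions and all of whose states are reachable, for `k ≥ 1` and
a state `u`, letting `P̂_{k+1}(u) = ⋃_{w ∈ P_k(u)} P_k(w)`:
`P_{k+1}(u)` consists exactly of the states of `P̂_{k+1}(u)` whose
length-`2^{k+1}` suffix of the infimum string is co-lex minimum in
`P̂_{k+1}(u)`. -/
theorem extender_set_doubling_step
    {A Q : Type*} [LinearOrder A] [Fintype A] [Fintype Q]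
    (M : PDFA A Q) (lam : Q → A) (hic : M.InputConsistent lam)
    (hstart : M.NoIncomingStart) (hreach : M.Reachable)
    (ginf : Q → CStr A)
    (hinf : ∀ u, IsColexGLB (CStr.ofList '' M.I u) (ginf u))
    (k : ℕ) (hk : 1 ≤ k) (u : Q) :
    M.Pset ginf (2 ^ (k + 1)) u =
      {v ∈ ⋃ w ∈ M.Pset ginf (2 ^ k) u, M.Pset ginf (2 ^ k) w |
        ∀ v' ∈ ⋃ w ∈ M.Pset ginf (2 ^ k) u, M.Pset ginf (2 ^ k) w,
          colexLe (CStr.suf (2 ^ (k + 1)) (ginf v)) (CStr.suf (2 ^ (k + 1)) (ginf v'))} := by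
  classical
  set m := 2 ^ k with hmdef
  have h2m : 2 ^ (k + 1) = m + m := by rw [pow_succ]; omega
  rw [h2m]
  -- membership in the doubled union, as an existential
  have hPhat : ∀ x, (x ∈ ⋃ w ∈ M.Pset ginf m u, M.Pset ginf m w) ↔
      ∃ w, w ∈ M.Pset ginf m u ∧ x ∈ M.Pset ginf m w := by
    intro x
    simp [Set.mem_iUnion]
  -- Claim 2: any member of the doubled union can read a word matching
  -- `suf (m+m) (ginf u)` into `u`, so `drop (m+m) (ginf u)` bounds its infimum.
  have claim2 : ∀ v', (∃ w', w' ∈ M.Pset ginf m u ∧ v' ∈ M.Pset ginf m w') →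
      colexLe ((ginf u).drop (m + m)) (ginf v') := by
    rintro v' ⟨w', hw', hv'⟩
    obtain ⟨⟨W2, hW2len, hW2match, hW2δ⟩, hext2⟩ := hw'
    obtain ⟨⟨W1, hW1len, hW1match, hW1δ⟩, hext1⟩ := hv'
    refine reach_lb M ginf hinf (W := W1 ++ W2) (by simp [hW1len, hW2len]) ?_ ?_
    · intro j hj
      rw [ofList_append]
      by_cases hjm : j < m
      · rw [if_pos (by omega), hW2match j hjm]
      · rw [if_neg (by rw [hW2len]; omega), hW2len, hW1match (j - m) (by omega),
          hext2 (j - m) (by omega)]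
        congr 1
        omega
    · rw [δStar_append, hW1δ]
      simpa using hW2δ
  -- chain construction: the canonical minimal element `b` of the doubled union
  have hbex : (∀ j, j < m + m → ginf u j ≠ ⊥) →
      ∃ b, (∃ w, w ∈ M.Pset ginf m u ∧ b ∈ M.Pset ginf m w) ∧
        ginf b = (ginf u).drop (m + m) := by
    intro hlive
    obtain ⟨z, Wz, hWzlen, hWzmatch, hWzδ, hgz⟩ := chain M lam ginf hic hreach hinf m u
      (fun j hj => hlive j (by omega))
    have hzlive : ∀ j < m, ginf z j ≠ ⊥ := fun j hj => by
      rw [hgz]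
      exact hlive (j + m) (by omega)
    obtain ⟨b, Wb, hWblen, hWbmatch, hWbδ, hgb⟩ := chain M lam ginf hic hreach hinf m z hzlive
    have hzP : z ∈ M.Pset ginf m u := by
      refine ⟨⟨Wz, hWzlen, hWzmatch, hWzδ⟩, fun j hj => ?_⟩
      rw [hgz]
      show ginf u (j + m) = ginf u (m + j)
      rw [Nat.add_comm]
    have hbP : b ∈ M.Pset ginf m z := by
      refine ⟨⟨Wb, hWblen, hWbmatch, hWbδ⟩, fun j hj => ?_⟩
      rw [hgb]
      show ginf z (j + m) = ginf z (m + j)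
      rw [Nat.add_comm]
    refine ⟨b, ⟨z, hzP, hbP⟩, ?_⟩
    rw [hgb, hgz]
    funext i
    show ginf u (i + m + m) = ginf u (i + (m + m))
    rw [Nat.add_assoc]
  ext v
  simp only [Set.mem_sep_iff, Set.mem_setOf_eq, hPhat]
  constructor
  · -- direction ⊆
    rintro ⟨⟨W, hWlen, hWmatch, hWδ⟩, hext⟩
    have hlive : ∀ j, j < m + m → ginf u j ≠ ⊥ := fun j hj => by
      rw [← hWmatch j hj]
      exact ofList_ne_bot (by omega)
    obtain ⟨b, hbPhat, hgb⟩ := hbex hlive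
    -- split the word
    set W1 : List A := W.take m with hW1def
    set W2 : List A := W.drop m with hW2def
    have hW12 : W = W1 ++ W2 := (List.take_append_drop m W).symm
    have hW1len : W1.length = m := by rw [hW1def, List.length_take]; omega
    have hW2len : W2.length = m := by rw [hW2def, List.length_drop]; omega
    rw [hW12, δStar_append] at hWδ
    rcases hy : M.δStar v W1 with _ | y
    · rw [hy] at hWδ; simp at hWδ
    rw [hy] at hWδ
    simp only [Option.bind_some] at hWδ
    -- hWδ : M.δStar y W2 = some u
    have hmW : ∀ j, j < m + m → CStr.ofList (W1 ++ W2) j = ginf u j := by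
      rw [← hW12]; exact hWmatch
    have hW2match : ∀ j < m, CStr.ofList W2 j = ginf u j := fun j hj => by
      have := hmW j (by omega)
      rwa [ofList_append, if_pos (by rw [hW2len]; omega)] at this
    have hW1match : ∀ j < m, CStr.ofList W1 j = ginf u (m + j) := fun j hj => by
      have := hmW (m + j) (by omega)
      rwa [ofList_append, if_neg (by rw [hW2len]; omega), hW2len,
        show m + j - m = j from by omega] at this
    -- step (i)
    have hzy : colexLe ((ginf u).drop m) (ginf y) := reach_lb M ginf hinf hW2len hW2match hWδ
    -- step (ii)
    obtain ⟨α0, hα0⟩ := hreach v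
    have hyc : colexLe (ginf y) (CStr.ofList (α0 ++ W1)) := by
      refine (hinf y).2.1 _ ⟨_, ?_, rfl⟩
      show M.δStar M.start (α0 ++ W1) = some y
      rw [δStar_append, hα0]
      simpa using hy
    -- step (iii): sandwich
    have hagac : ∀ j < m, (ginf u).drop m j = CStr.ofList (α0 ++ W1) j := fun j hj => by
      rw [ofList_append, if_pos (by rw [hW1len]; omega), hW1match j hj]
      show ginf u (j + m) = ginf u (m + j)
      rw [Nat.add_comm]
    have hgyag : ∀ j, j < m → ginf y j = ginf u (m + j) := by
      have hs := colex_sandwich hzy hyc hagac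
      intro j hj
      rw [hs j hj]
      show ginf u (j + m) = ginf u (m + j)
      rw [Nat.add_comm]
    have hyP : y ∈ M.Pset ginf m u := ⟨⟨W2, hW2len, hW2match, hWδ⟩, hgyag⟩
    have hW1matchy : ∀ j < m, CStr.ofList W1 j = ginf y j := fun j hj => by
      rw [hW1match j hj, hgyag j hj]
    -- step (iv)
    have hdropy : colexLe ((ginf y).drop m) (ginf v) := reach_lb M ginf hinf hW1len hW1matchy hy
    -- step (v)
    have hdd : ((ginf u).drop m).drop m = (ginf u).drop (m + m) := by
      funext i
      show ginf u (i + m + m) = ginf u (i + (m + m))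
      rw [Nat.add_assoc]
    have hzdrop : colexLe ((ginf u).drop (m + m)) ((ginf y).drop m) := by
      rw [← hdd]
      exact agree_then_le_drop hzy (fun j hj => ((hgyag j hj).trans (by
        show ginf u (m + j) = ginf u (j + m); rw [Nat.add_comm])).symm)
    have hagvc : ∀ j < m + m, (ginf u).drop (m + m) j = ginf v j := fun j hj => by
      rw [hext j hj]
      show ginf u (j + (m + m)) = ginf u (m + m + j)
      rw [Nat.add_comm]
    have hyu : ∀ j, j < m + m → (ginf y).drop m j = (ginf u).drop (m + m) j :=
      colex_sandwich hzdrop hdropy hagvc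
    have hvexty : ∀ j, j < m → ginf v j = ginf y (m + j) := fun j hj => by
      have h1 := hyu j (by omega)
      have h2 := hagvc j (by omega)
      rw [← h2, ← h1]
      show ginf y (j + m) = ginf y (m + j)
      rw [Nat.add_comm]
    have hvP : v ∈ M.Pset ginf m y := ⟨⟨W1, hW1len, hW1matchy, hy⟩, hvexty⟩
    refine ⟨⟨y, hyP, hvP⟩, ?_⟩
    intro v' hv'
    have hlb := claim2 v' hv'
    have h1 : CStr.suf (m + m) (ginf v) = CStr.suf (m + m) ((ginf u).drop (m + m)) :=
      suf_congr (fun j hj => (hagvc j hj).symm)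
    rw [h1]
    exact colexLe_suf _ hlb
  · -- direction ⊇
    rintro ⟨hvPhat, hmin⟩
    obtain ⟨w', hw', hv'⟩ := hvPhat
    obtain ⟨⟨W2, hW2len, hW2match, hW2δ⟩, hext2⟩ := hw'
    obtain ⟨⟨W1, hW1len, hW1match, hW1δ⟩, hext1⟩ := hv'
    have hlive : ∀ j, j < m + m → ginf u j ≠ ⊥ := by
      intro j hj
      by_cases hjm : j < m
      · rw [← hW2match j hjm]
        exact ofList_ne_bot (by omega)
      · rw [show j = m + (j - m) from by omega, ← hext2 (j - m) (by omega),
          ← hW1match (j - m) (by omega)]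
        exact ofList_ne_bot (by omega)
    obtain ⟨b, hbPhat, hgb⟩ := hbex hlive
    have hminb := hmin b hbPhat
    have hbv : colexLe (ginf b) (ginf v) := by
      rw [hgb]
      exact claim2 v ⟨w', ⟨⟨W2, hW2len, hW2match, hW2δ⟩, hext2⟩,
        ⟨⟨W1, hW1len, hW1match, hW1δ⟩, hext1⟩⟩
    have hsufeq : CStr.suf (m + m) (ginf v) = CStr.suf (m + m) (ginf b) :=
      colexLe_antisymm hminb (colexLe_suf _ hbv)
    have hptw := suf_eq_pointwise hsufeq
    refine ⟨⟨W1 ++ W2, by simp [hW1len, hW2len], ?_, ?_⟩, ?_⟩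
    · intro j hj
      rw [ofList_append]
      by_cases hjm : j < m
      · rw [if_pos (by rw [hW2len]; omega), hW2match j hjm]
      · rw [if_neg (by rw [hW2len]; omega), hW2len, hW1match (j - m) (by omega),
          hext2 (j - m) (by omega)]
        congr 1
        omega
    · rw [δStar_append, hW1δ]
      simpa using hW2δ
    · intro j hj
      rw [hptw j hj, hgb]
      show ginf u (j + (m + m)) = ginf u (m + m + j)
      rw [Nat.add_comm]
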